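/- arXiv:2105.11377 — 2 statements merged into one kernel-verified Lean document; each statement's English description precedes it below -/
import Mathlib

section
/- Let V be a real inner product space, v, u ∈ V with v ≠ 0, and t > 0, r ≥ 0 such that tv + ru ≠ 0 and ⟨v + (r/t)u, v⟩ + ‖v + (r/t)u‖·‖v‖ ≠ 0. Then ⟨tv + ru, v⟩ − ‖tv + ru‖·‖v‖ = −(r²/t) · (‖u‖²‖v‖² − ⟨u,v⟩²) / (⟨v + (r/t)u, v⟩ + ‖v + (r/t)u‖·‖v‖). -/
open RealInnerProductSpace

section GramDet

variable {V : Type*} [NormedAddCommGroup V] [InnerProductSpace ℝ V]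

def gramDet (u v : V) : ℝ := ‖u‖ ^ 2 * ‖v‖ ^ 2 - ⟪u, v⟫ ^ 2

/-- The Gram determinant is a squared area, so shearing along `v` leaves it unchanged and
scaling `u` by `s` multiplies it by `s ^ 2`. -/
theorem gramDet_self_add_smul_left (v u : V) (s : ℝ) :
    gramDet (v + s • u) v = s ^ 2 * gramDet u v := by
  simp only [gramDet, ← real_inner_self_eq_norm_sq, inner_add_left, inner_add_right,
    real_inner_smul_left, real_inner_smul_right, real_inner_comm v u]
  ring

theorem inner_sub_norm_mul_norm_eq_neg_gramDet_div {w v : V}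
    (h : ⟪w, v⟫ + ‖w‖ * ‖v‖ ≠ 0) :
    ⟪w, v⟫ - ‖w‖ * ‖v‖ = -gramDet w v / (⟪w, v⟫ + ‖w‖ * ‖v‖) := by
  rw [eq_div_iff h, gramDet]
  ring

end GramDet

theorem inner_norm_identity_general {V : Type*} [NormedAddCommGroup V]
    [InnerProductSpace ℝ V] (v u : V) {t r : ℝ}
    (ht : 0 < t)
    (hden : ⟪v + (r / t) • u, v⟫ + ‖v + (r / t) • u‖ * ‖v‖ ≠ 0) :
    ⟪t • v + r • u, v⟫ - ‖t • v + r • u‖ * ‖v‖ =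
      -(r ^ 2 / t) *
        ((‖u‖ ^ 2 * ‖v‖ ^ 2 - ⟪u, v⟫ ^ 2) /
          (⟪v + (r / t) • u, v⟫ + ‖v + (r / t) • u‖ * ‖v‖)) := by
  have hscale : t • v + r • u = t • (v + (r / t) • u) := by
    rw [smul_add, smul_smul, mul_div_cancel₀ r ht.ne']
  rw [hscale, real_inner_smul_left, norm_smul, Real.norm_of_nonneg ht.le, mul_assoc, ← mul_sub,
    inner_sub_norm_mul_norm_eq_neg_gramDet_div hden, gramDet_self_add_smul_left, ← gramDet]
  field_simp

/-- The algebraic identity behind the computation of the exponent `-ℓ I(u)`. -/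
theorem inner_norm_identity {V : Type*} [NormedAddCommGroup V]
    [InnerProductSpace ℝ V] (v u : V) (hv : v ≠ 0) {t r : ℝ}
    (ht : 0 < t) (hr : 0 ≤ r) (hne : t • v + r • u ≠ 0)
    (hden : ⟪v + (r / t) • u, v⟫ + ‖v + (r / t) • u‖ * ‖v‖ ≠ 0) :
    ⟪t • v + r • u, v⟫ - ‖t • v + r • u‖ * ‖v‖ =
      -(r ^ 2 / t) *
        ((‖u‖ ^ 2 * ‖v‖ ^ 2 - ⟪u, v⟫ ^ 2) /
          (⟪v + (r / t) • u, v⟫ + ‖v + (r / t) • u‖ * ‖v‖)) :=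
  inner_norm_identity_general v u ht hden
end

section
/- Let V be a real inner product space, v, u ∈ V with v ≠ 0, and r : ℝ_{>0} → ℝ_{>0} a function with lim_{t→∞} r(t)/t = 0 and lim_{t→∞} r(t)²/t = ℓ for some ℓ ∈ [0, ∞). Then lim_{t→∞} (⟨tv + r(t)u, v⟩ − ‖tv + r(t)u‖·‖v‖) = −ℓ · (‖u‖²‖v‖² − ⟨u,v⟩²) / (2‖v‖²). -/
open Filter RealInnerProductSpace

/-- The limit identifying the exponent `-ℓ I(u)` in the local mixing theorem. -/
theorem inner_norm_limit {V : Type*} [NormedAddCommGroup V]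
    [InnerProductSpace ℝ V] (v u : V) (hv : v ≠ 0)
    (r : ℝ → ℝ) (hrpos : ∀ t > 0, 0 < r t) {ℓ : ℝ} (hℓ : 0 ≤ ℓ)
    (hr1 : Tendsto (fun t => r t / t) atTop (nhds 0))
    (hr2 : Tendsto (fun t => (r t) ^ 2 / t) atTop (nhds ℓ)) :
    Tendsto (fun t => ⟪t • v + r t • u, v⟫ - ‖t • v + r t • u‖ * ‖v‖) atTop
      (nhds (-ℓ * ((‖u‖ ^ 2 * ‖v‖ ^ 2 - ⟪u, v⟫ ^ 2) / (2 * ‖v‖ ^ 2)))) := by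
  have hvpos : (0:ℝ) < ‖v‖ := norm_pos_iff.mpr hv
  set c := ⟪u, v⟫ with hc
  set D := ‖u‖ ^ 2 * ‖v‖ ^ 2 - c ^ 2 with hD
  -- the denominator after dividing by t
  have hden : Tendsto (fun t => ‖v‖ ^ 2 + (r t / t) * c + ‖v + (r t / t) • u‖ * ‖v‖)
      atTop (nhds (2 * ‖v‖ ^ 2)) := by
    have hcont : Continuous (fun s : ℝ => ‖v‖ ^ 2 + s * c + ‖v + s • u‖ * ‖v‖) := by
      continuity
    have h := (hcont.tendsto 0).comp hr1
    rw [show (2:ℝ) * ‖v‖ ^ 2 = ‖v‖ ^ 2 + (0:ℝ) * c + ‖v + (0:ℝ) • u‖ * ‖v‖ by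
      simp [sq]; ring]
    exact h
  have hg : Tendsto (fun t => (-(r t ^ 2 / t) * D) /
      (‖v‖ ^ 2 + (r t / t) * c + ‖v + (r t / t) • u‖ * ‖v‖)) atTop
      (nhds ((-ℓ * D) / (2 * ‖v‖ ^ 2))) :=
    (hr2.neg.mul_const D).div hden (by positivity)
  have hlim : (-ℓ * D) / (2 * ‖v‖ ^ 2) = -ℓ * (D / (2 * ‖v‖ ^ 2)) := by ring
  rw [hlim] at hg
  refine Tendsto.congr' ?_ hg
  have hev : ∀ᶠ t in atTop,
      ‖v‖ ^ 2 < ‖v‖ ^ 2 + (r t / t) * c + ‖v + (r t / t) • u‖ * ‖v‖ :=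
    hden.eventually (eventually_gt_nhds (by nlinarith))
  filter_upwards [hev, eventually_gt_atTop (0:ℝ)] with t hdt ht
  have htne : t ≠ 0 := ne_of_gt ht
  set A := ⟪t • v + r t • u, v⟫ with hA
  set B := ‖t • v + r t • u‖ with hB
  have hAeq : A = t * ‖v‖ ^ 2 + r t * c := by
    rw [hA, inner_add_left, real_inner_smul_left, real_inner_smul_left,
      real_inner_self_eq_norm_sq, hc, real_inner_comm]
  have hBt : ‖v + (r t / t) • u‖ = B / t := by
    have : v + (r t / t) • u = (1 / t) • (t • v + r t • u) := by
      rw [smul_add, smul_smul, smul_smul]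
      congr 1
      · rw [one_div_mul_cancel htne, one_smul]
      · congr 1; field_simp
    rw [this, norm_smul, hB]
    simp [abs_of_pos ht, div_eq_mul_inv, mul_comm]
  have hB2 : B ^ 2 = t ^ 2 * ‖v‖ ^ 2 + 2 * (t * r t * c) + r t ^ 2 * ‖u‖ ^ 2 := by
    rw [hB, @norm_add_sq_real, norm_smul, norm_smul, real_inner_smul_left,
      real_inner_smul_right, real_inner_comm, ← hc]
    rw [Real.norm_eq_abs, Real.norm_eq_abs, abs_of_pos ht, abs_of_pos (hrpos t ht)]
    ring
  have hBnn : 0 ≤ B := norm_nonneg _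
  rw [hBt] at hdt ⊢
  -- denominator positivity: A + B * ‖v‖ > 0
  have hdpos : 0 < A + B * ‖v‖ := by
    have : ‖v‖ ^ 2 + (r t / t) * c + B / t * ‖v‖ = (A + B * ‖v‖) / t := by
      rw [hAeq]; field_simp
    rw [this] at hdt
    have h2 : 0 < (A + B * ‖v‖) / t := lt_trans (by positivity) hdt
    exact (div_pos_iff.mp h2).resolve_right (fun h => absurd h.2 (not_lt.mpr ht.le)) |>.1
  -- key algebraic identity
  have hkey : A ^ 2 - B ^ 2 * ‖v‖ ^ 2 = -(r t ^ 2) * D := by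
    rw [hAeq, hB2, hD]; ring
  have hsum : ‖v‖ ^ 2 + (r t / t) * c + B / t * ‖v‖ = (A + B * ‖v‖) / t := by
    rw [hAeq]; field_simp
  rw [hsum]
  rw [div_eq_iff (by positivity)]
  field_simp
  nlinarith [hkey]
end
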